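/- Let σ be a permutation of {1,…,n} sorting the costs in descending order, f_(1) ≥ ⋯ ≥ f_(n) with f_(i) := f_{σ(i)} and p_(i) := p_{σ(i)}. Let k ∈ {1,…,n−1}, and let ε ≥ 0 and Δ > 0 satisfy Σ_{i=k+2}^{n} p_(i) ≤ ε · Σ_{i=1}^{k+1} p_(i) and (ε + Δ) · Σ_{i=1}^{k} p_(i) ≤ Σ_{i=k+1}^{n} p_(i). Then the worst-case expected cost over the budgeted uncertainty set is linear on this range with slope equal to Σ_{i=1}^{k} p_(i) (f_(i) − f_(k+1)); that is, V_b(ε + Δ; f) − V_b(ε; f) = Δ · Σ_{i=1}^{k} p_(i) (f_(i) − f_(k+1)). -/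

import Mathlib

open Finset

/-! Once the outcomes are listed by decreasing cost, the worst case over the probability vectors
`q ≤ c` is the greedy one: fill the costliest outcomes up to their caps and put the
remaining mass on the first outcome `k` whose cap is not exhausted. Its value is
`f k + ∑_{i < k} c i (f i - f k)`, which for `c = (1 + e) p` is affine in `e` as long as the same
`k` stays critical; the two hypotheses on `ε` and `ε + Δ` say exactly that. -/

variable {ι : Type*} [Fintype ι]

def cappedSimplex (c : ι → ℝ) : Set (ι → ℝ) :=
  {q | (∑ i, q i = 1 ∧ ∀ i, 0 ≤ q i) ∧ ∀ i, q i ≤ c i}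

lemma comp_mem_cappedSimplex {κ : Type*} [Fintype κ] (σ : κ ≃ ι) {c q : ι → ℝ}
    (hq : q ∈ cappedSimplex c) : q ∘ σ ∈ cappedSimplex (c ∘ σ) := by
  obtain ⟨⟨hsum, hnonneg⟩, hcap⟩ := hq
  exact ⟨⟨(Equiv.sum_comp σ q).trans hsum, fun j => hnonneg (σ j)⟩, fun j => hcap (σ j)⟩

lemma image_cappedSimplex_comp_equiv {κ : Type*} [Fintype κ] (σ : κ ≃ ι) (c f : ι → ℝ) :
    (fun q => ∑ i, q i * f i) '' cappedSimplex c =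
      (fun q => ∑ j, q j * f (σ j)) '' cappedSimplex (c ∘ σ) := by
  ext x
  constructor
  · rintro ⟨q, hq, rfl⟩
    exact ⟨q ∘ σ, comp_mem_cappedSimplex σ hq, Equiv.sum_comp σ fun i => q i * f i⟩
  · rintro ⟨q, hq, rfl⟩
    refine ⟨q ∘ σ.symm, by simpa [Function.comp_assoc] using comp_mem_cappedSimplex σ.symm hq, ?_⟩
    simpa using (Equiv.sum_comp σ fun i => q (σ.symm i) * f i).symm

section Sorted

variable [LinearOrder ι] [LocallyFiniteOrderBot ι]

lemma sum_Iio_add_sum_Ici [LocallyFiniteOrderTop ι] {M : Type*} [AddCommMonoid M]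
    (g : ι → M) (k : ι) :
    ∑ i ∈ Iio k, g i + ∑ i ∈ Ici k, g i = ∑ i, g i := by
  rw [← sum_filter_add_sum_filter_not univ (· < k)]
  simp only [not_lt, filter_gt_eq_Iio, filter_le_eq_Ici]

lemma sum_Iic_add_sum_Ioi [LocallyFiniteOrderTop ι] {M : Type*} [AddCommMonoid M]
    (g : ι → M) (k : ι) :
    ∑ i ∈ Iic k, g i + ∑ i ∈ Ioi k, g i = ∑ i, g i := by
  rw [← sum_filter_add_sum_filter_not univ (· ≤ k)]
  simp only [not_le, filter_ge_eq_Iic, filter_lt_eq_Ioi]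

def greedyFill (c : ι → ℝ) (k : ι) : ι → ℝ :=
  fun i => if i < k then c i else if i = k then 1 - ∑ j ∈ Iio k, c j else 0

lemma sum_greedyFill_mul (c g : ι → ℝ) (k : ι) :
    ∑ i, greedyFill c k i * g i = ∑ i ∈ Iio k, c i * g i + (1 - ∑ i ∈ Iio k, c i) * g k := by
  rw [← sum_filter_add_sum_filter_not univ (· < k), filter_gt_eq_Iio]
  congr 1
  · exact sum_congr rfl fun i hi => by rw [greedyFill, if_pos (mem_Iio.mp hi)]
  · rw [sum_eq_single_of_mem k (by simp)]
    · simp [greedyFill]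
    · intro i hi hik
      simp [greedyFill, (mem_filter.mp hi).2, hik]

lemma greedyFill_mem_cappedSimplex {c : ι → ℝ} {k : ι} (hc : ∀ i, 0 ≤ c i)
    (hlo : ∑ i ∈ Iio k, c i ≤ 1) (hhi : 1 ≤ ∑ i ∈ Iic k, c i) :
    greedyFill c k ∈ cappedSimplex c := by
  rw [Iic_eq_cons_Iio, sum_cons] at hhi
  refine ⟨⟨by simpa using sum_greedyFill_mul c 1 k, fun i => ?_⟩, fun i => ?_⟩ <;>
    unfold greedyFill <;> split_ifs with hlt heq
  · exact hc i
  · linarith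
  · exact le_rfl
  · exact le_rfl
  · subst heq; linarith
  · exact hc i

lemma sum_mul_le_of_mem_cappedSimplex {c f q : ι → ℝ} (hf : Antitone f) (k : ι)
    (hq : q ∈ cappedSimplex c) :
    ∑ i, q i * f i ≤ f k + ∑ i ∈ Iio k, c i * (f i - f k) := by
  obtain ⟨⟨hsum, hnonneg⟩, hcap⟩ := hq
  calc ∑ i, q i * f i = f k + ∑ i, q i * (f i - f k) := by
        simp only [mul_sub, sum_sub_distrib, ← sum_mul, hsum]
        ring
    _ ≤ f k + ∑ i ∈ Iio k, q i * (f i - f k) := by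
        gcongr 1
        -- beyond `k` the costs are at most `f k`, so those terms only lower the sum
        refine sum_le_sum_of_subset_of_nonpos' (subset_univ _) fun i _ hi => ?_
        exact mul_nonpos_of_nonneg_of_nonpos (hnonneg i)
          (sub_nonpos.mpr (hf (not_lt.mp (mt mem_Iio.mpr hi))))
    _ ≤ f k + ∑ i ∈ Iio k, c i * (f i - f k) := by
        gcongr with i hi
        · exact sub_nonneg.mpr (hf (mem_Iio.mp hi).le)
        · exact hcap i

theorem isGreatest_image_cappedSimplex {c f : ι → ℝ} (hf : Antitone f) {k : ι}
    (hc : ∀ i, 0 ≤ c i) (hlo : ∑ i ∈ Iio k, c i ≤ 1) (hhi : 1 ≤ ∑ i ∈ Iic k, c i) :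
    IsGreatest ((fun q => ∑ i, q i * f i) '' cappedSimplex c)
      (f k + ∑ i ∈ Iio k, c i * (f i - f k)) := by
  refine ⟨⟨greedyFill c k, greedyFill_mem_cappedSimplex hc hlo hhi, ?_⟩, ?_⟩
  · simp only [sum_greedyFill_mul, mul_sub, sum_sub_distrib, ← sum_mul]
    ring
  · rintro _ ⟨q, hq, rfl⟩
    exact sum_mul_le_of_mem_cappedSimplex hf k hq

end Sorted

theorem stmt7_general (n : ℕ) (p f : Fin n → ℝ)
    (hp1 : ∑ i, p i = 1) (hp : ∀ i, 0 < p i)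
    (σ : Equiv.Perm (Fin n)) (hσ : ∀ i j : Fin n, i ≤ j → f (σ j) ≤ f (σ i))
    (k : Fin n)
    (ε Δ : ℝ) (hε : 0 ≤ ε) (hΔ : 0 < Δ)
    (h1 : (∑ i ∈ Finset.univ.filter (fun i : Fin n => (k : ℕ) < (i : ℕ)), p (σ i))
          ≤ ε * ∑ i ∈ Finset.univ.filter (fun i : Fin n => (i : ℕ) ≤ (k : ℕ)), p (σ i))
    (h2 : (ε + Δ) * (∑ i ∈ Finset.univ.filter (fun i : Fin n => (i : ℕ) < (k : ℕ)), p (σ i))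
          ≤ ∑ i ∈ Finset.univ.filter (fun i : Fin n => (k : ℕ) ≤ (i : ℕ)), p (σ i)) :
    let Vb : ℝ → ℝ := fun e => sSup ((fun q : Fin n → ℝ => ∑ i, q i * f i) ''
      {q : Fin n → ℝ | (∑ i, q i = 1 ∧ ∀ i, 0 ≤ q i) ∧ ∀ i, q i ≤ (1 + e) * p i})
    Vb (ε + Δ) - Vb ε =
      Δ * ∑ i ∈ Finset.univ.filter (fun i : Fin n => (i : ℕ) < (k : ℕ)),
        p (σ i) * (f (σ i) - f (σ k)) := by
  intro Vb
  simp only [← Fin.lt_def, ← Fin.le_def, filter_gt_eq_Iio, filter_lt_eq_Ioi, filter_ge_eq_Iic,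
    filter_le_eq_Ici] at h1 h2 ⊢
  have hsum : ∑ i, p (σ i) = 1 := (Equiv.sum_comp σ p).trans hp1
  have hsplit_lt := sum_Iio_add_sum_Ici (fun i => p (σ i)) k
  have hsplit_le := sum_Iic_add_sum_Ioi (fun i => p (σ i)) k
  have hΔlt : 0 ≤ Δ * ∑ i ∈ Iio k, p (σ i) :=
    mul_nonneg hΔ.le (sum_nonneg fun i _ => (hp (σ i)).le)
  have hΔle : 0 ≤ Δ * ∑ i ∈ Iic k, p (σ i) :=
    mul_nonneg hΔ.le (sum_nonneg fun i _ => (hp (σ i)).le)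
  have value : ∀ e, 0 ≤ e → (1 + e) * ∑ i ∈ Iio k, p (σ i) ≤ 1 →
      1 ≤ (1 + e) * ∑ i ∈ Iic k, p (σ i) →
      Vb e = f (σ k) + ∑ i ∈ Iio k, (1 + e) * p (σ i) * (f (σ i) - f (σ k)) := by
    intro e he hlo hhi
    show sSup ((fun q => ∑ i, q i * f i) '' cappedSimplex fun i => (1 + e) * p i) = _
    rw [image_cappedSimplex_comp_equiv σ]
    refine (isGreatest_image_cappedSimplex (f := f ∘ σ) (fun i j hij => hσ i j hij)
      (fun i => ?_) ?_ ?_).csSup_eq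
    · exact mul_nonneg (by linarith) (hp (σ i)).le
    · simpa only [Function.comp_apply, ← mul_sum] using hlo
    · simpa only [Function.comp_apply, ← mul_sum] using hhi
  rw [value (ε + Δ) (by positivity) (by linarith) (by linarith),
    value ε hε (by linarith) (by linarith), add_sub_add_left_eq_sub, ← sum_sub_distrib, mul_sum]
  exact sum_congr rfl fun i _ => by ring

/-- on the top-k saturation regime, the budgeted-uncertainty worst-case
expected cost is linear in ε with slope `Σ_{i≤k} p_(i)(f_(i) − f_(k+1))`:
`V_b(ε+Δ) − V_b(ε) = Δ · Σ_{i≤k} p_(i)(f_(i) − f_(k+1))`.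
(Sorted positions are 0-indexed: `f_(i+1) = f (σ i)`.) -/
theorem stmt7 (n : ℕ) (hn : 2 ≤ n) (p f : Fin n → ℝ)
    (hp1 : ∑ i, p i = 1) (hp : ∀ i, 0 < p i)
    (σ : Equiv.Perm (Fin n)) (hσ : ∀ i j : Fin n, i ≤ j → f (σ j) ≤ f (σ i))
    (k : Fin n) (hk1 : 1 ≤ (k : ℕ)) (hk2 : (k : ℕ) ≤ n - 1)
    (ε Δ : ℝ) (hε : 0 ≤ ε) (hΔ : 0 < Δ)
    (h1 : (∑ i ∈ Finset.univ.filter (fun i : Fin n => (k : ℕ) < (i : ℕ)), p (σ i))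
          ≤ ε * ∑ i ∈ Finset.univ.filter (fun i : Fin n => (i : ℕ) ≤ (k : ℕ)), p (σ i))
    (h2 : (ε + Δ) * (∑ i ∈ Finset.univ.filter (fun i : Fin n => (i : ℕ) < (k : ℕ)), p (σ i))
          ≤ ∑ i ∈ Finset.univ.filter (fun i : Fin n => (k : ℕ) ≤ (i : ℕ)), p (σ i)) :
    let Vb : ℝ → ℝ := fun e => sSup ((fun q : Fin n → ℝ => ∑ i, q i * f i) ''
      {q : Fin n → ℝ | (∑ i, q i = 1 ∧ ∀ i, 0 ≤ q i) ∧ ∀ i, q i ≤ (1 + e) * p i})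
    Vb (ε + Δ) - Vb ε =
      Δ * ∑ i ∈ Finset.univ.filter (fun i : Fin n => (i : ℕ) < (k : ℕ)),
        p (σ i) * (f (σ i) - f (σ k)) :=
  stmt7_general n p f hp1 hp σ hσ k ε Δ hε hΔ h1 h2
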